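/- arXiv:2402.15446 — 5 statements merged into one kernel-verified Lean document; each statement's English description precedes it below -/
import Mathlib

section
/- The admissible set 𝒢 is convex, and it is invariant under positive scaling: for every state U ∈ 𝒢 and every real λ > 0, the componentwise-scaled state λU = (λρ, λm, λE) belongs to 𝒢. -/
open Matrix

noncomputable section

/-- A state is a triple `(ρ, m, E)` with `ρ : ℝ`, `m : ℝ²`, `E` a 2×2 real matrix. -/
abbrev Mat2 := Matrix (Fin 2) (Fin 2) ℝ

/-- The pressure tensor `p(U) = 2E - (1/ρ) m mᵀ`. -/
def pTensor (ρ : ℝ) (m : Fin 2 → ℝ) (E : Mat2) : Mat2 :=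
  (2 : ℝ) • E - ρ⁻¹ • vecMulVec m m

/-- `φ(U; z, u*) = zᵀEz − (m·z)(u*·z) + (ρ/2)(u*·z)²`. -/
def phi (ρ : ℝ) (m : Fin 2 → ℝ) (E : Mat2) (z u : Fin 2 → ℝ) : ℝ :=
  z ⬝ᵥ (E *ᵥ z) - (m ⬝ᵥ z) * (u ⬝ᵥ z) + (ρ / 2) * (u ⬝ᵥ z) ^ 2

/-- The admissible set `𝒢`: states with positive density and positive definite pressure tensor. -/
def G : Set (ℝ × (Fin 2 → ℝ) × Mat2) :=
  {U | 0 < U.1 ∧ (pTensor U.1 U.2.1 U.2.2).PosDef}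

/-- The closed admissible set `𝒢̄`: states (so `E` symmetric) with `ρ ≥ 0` and
`φ(U; z, u*) ≥ 0` for all `z, u*`. -/
def Gbar : Set (ℝ × (Fin 2 → ℝ) × Mat2) :=
  {U | 0 ≤ U.1 ∧ U.2.2.IsSymm ∧ ∀ z u : Fin 2 → ℝ, 0 ≤ phi U.1 U.2.1 U.2.2 z u}

/-! For `ρ > 0` the pressure form is `zᵀ p(U) z = 2 zᵀEz − (m·z)²/ρ`, and `(ρ, x) ↦ x²/ρ` is
subadditive (Sedrakyan's inequality) and positively homogeneous, so `𝒢` is a convex cone. -/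

lemma sq_add_div_add_le {p q : ℝ} (hp : 0 < p) (hq : 0 < q) (x y : ℝ) :
    (x + y) ^ 2 / (p + q) ≤ x ^ 2 / p + y ^ 2 / q := by
  simpa [Fin.sum_univ_two] using
    Finset.sq_sum_div_le_sum_sq_div Finset.univ ![x, y] (g := ![p, q])
      (by simp [Fin.forall_fin_two, hp, hq])

lemma dotProduct_pTensor_mulVec (ρ : ℝ) (m : Fin 2 → ℝ) (E : Mat2) (z : Fin 2 → ℝ) :
    z ⬝ᵥ (pTensor ρ m E *ᵥ z) = 2 * (z ⬝ᵥ (E *ᵥ z)) - (m ⬝ᵥ z) ^ 2 / ρ := by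
  simp only [pTensor, sub_mulVec, smul_mulVec, dotProduct_sub, dotProduct_smul, vecMulVec_mulVec,
    smul_eq_mul, op_smul_eq_mul, dotProduct_comm z m]
  ring

lemma isHermitian_pTensor_iff (ρ : ℝ) (m : Fin 2 → ℝ) (E : Mat2) :
    (pTensor ρ m E).IsHermitian ↔ E.IsHermitian := by
  have hM : (ρ⁻¹ • vecMulVec m m).IsHermitian :=
    (posSemidef_vecMulVec_self_star m).isHermitian.smul (.all _)
  constructor
  · intro h
    have hE : E = (2 : ℝ)⁻¹ • (pTensor ρ m E + ρ⁻¹ • vecMulVec m m) := by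
      simp [pTensor, smul_smul]
    rw [hE]
    exact (h.add hM).smul (.all _)
  · intro h
    exact (h.smul (.all _)).sub hM

lemma mem_G_iff {U : ℝ × (Fin 2 → ℝ) × Mat2} :
    U ∈ G ↔ 0 < U.1 ∧ U.2.2.IsHermitian ∧
      ∀ z ≠ 0, (U.2.1 ⬝ᵥ z) ^ 2 / U.1 < 2 * (z ⬝ᵥ (U.2.2 *ᵥ z)) := by
  simp only [G, Set.mem_ofPred_eq, posDef_iff_dotProduct_mulVec, isHermitian_pTensor_iff,
    star_trivial, dotProduct_pTensor_mulVec, sub_pos]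

lemma add_mem_G {U V : ℝ × (Fin 2 → ℝ) × Mat2} (hU : U ∈ G) (hV : V ∈ G) : U + V ∈ G := by
  obtain ⟨hρU, hEU, hpU⟩ := mem_G_iff.mp hU
  obtain ⟨hρV, hEV, hpV⟩ := mem_G_iff.mp hV
  refine mem_G_iff.mpr ⟨add_pos hρU hρV, hEU.add hEV, fun z hz => ?_⟩
  calc ((U.2.1 + V.2.1) ⬝ᵥ z) ^ 2 / (U.1 + V.1)
      ≤ (U.2.1 ⬝ᵥ z) ^ 2 / U.1 + (V.2.1 ⬝ᵥ z) ^ 2 / V.1 := by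
        rw [add_dotProduct]; exact sq_add_div_add_le hρU hρV _ _
    _ < 2 * (z ⬝ᵥ (U.2.2 *ᵥ z)) + 2 * (z ⬝ᵥ (V.2.2 *ᵥ z)) := add_lt_add (hpU z hz) (hpV z hz)
    _ = 2 * (z ⬝ᵥ ((U.2.2 + V.2.2) *ᵥ z)) := by rw [add_mulVec, dotProduct_add, mul_add]

lemma smul_mem_G {U : ℝ × (Fin 2 → ℝ) × Mat2} (hU : U ∈ G) {c : ℝ} (hc : 0 < c) : c • U ∈ G := by
  obtain ⟨hρ, hE, hp⟩ := mem_G_iff.mp hU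
  refine mem_G_iff.mpr ⟨mul_pos hc hρ, hE.smul (.all c), fun z hz => ?_⟩
  calc ((c • U.2.1) ⬝ᵥ z) ^ 2 / (c * U.1) = c * ((U.2.1 ⬝ᵥ z) ^ 2 / U.1) := by
        rw [smul_dotProduct, smul_eq_mul]; field_simp
    _ < c * (2 * (z ⬝ᵥ (U.2.2 *ᵥ z))) := mul_lt_mul_of_pos_left (hp z hz) hc
    _ = 2 * (z ⬝ᵥ ((c • U.2.2) *ᵥ z)) := by rw [smul_mulVec, dotProduct_smul, smul_eq_mul]; ring

def admissibleCone : ConvexCone ℝ (ℝ × (Fin 2 → ℝ) × Mat2) where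
  carrier := G
  smul_mem' _ hc _ hU := smul_mem_G hU hc
  add_mem' _ hU _ hV := add_mem_G hU hV

/-- The admissible set `𝒢` is convex and invariant under positive scaling. -/
theorem admissible_convex_and_scale_invariant :
    Convex ℝ G ∧ ∀ U ∈ G, ∀ lam : ℝ, 0 < lam → lam • U ∈ G :=
  ⟨admissibleCone.convex, fun _ hU _ hlam => smul_mem_G hU hlam⟩
end
end

section
/- Let β > 0 and U = (ρ, m, E) ∈ 𝒢 with pressure tensor p = p(U) (entries p₁₁, p₁₂, p₂₂). If the real number δ̃₁ satisfies |δ̃₁| ≤ min{√(p₁₁/ρ), √(det(p)/(ρ p₂₂))}·β, then the state Ũ₁ := (βρ, βm + δ̃₁(ρ, 0), βE + δ̃₁·[[m₁, m₂/2],[m₂/2, 0]]) belongs to 𝒢̄. Likewise, if δ̃₂ satisfies |δ̃₂| ≤ min{√(p₂₂/ρ), √(det(p)/(ρ p₁₁))}·β, then Ũ₂ := (βρ, βm + δ̃₂(0, ρ), βE + δ̃₂·[[0, m₁/2],[m₁/2, m₂]]) belongs to 𝒢̄. -/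
/-!
φ is linear in the state, so for the perturbation in direction `i` one gets
`φ(Ũ; z, u) = β φ(U; z, u) + δ zᵢ w` with `w = m·z − ρ u·z`, while
`φ(U; z, u) = ½ zᵀpz + w²/(2ρ)`. Bounding `zᵀpz` below by the Schur complement
`(det p / pⱼⱼ) zᵢ²` (`j ≠ i`) leaves a binary quadratic form in `(zᵢ, w)` whose
discriminant condition is exactly `δ² ≤ det p / (ρ pⱼⱼ) · β²`.
-/

open Matrix

noncomputable section

lemma phi_smul_add_smul (β δ ρ : ℝ) (m m' : Fin 2 → ℝ) (E E' : Mat2) (z u : Fin 2 → ℝ) :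
    phi (β * ρ) (β • m + δ • m') (β • E + δ • E') z u
      = β * phi ρ m E z u + δ * phi 0 m' E' z u := by
  simp only [phi, add_mulVec, smul_mulVec, dotProduct_add, dotProduct_smul, add_dotProduct,
    smul_dotProduct, smul_eq_mul]
  ring

lemma phi_eq_pTensor_add_sq {ρ : ℝ} (hρ : ρ ≠ 0) (m : Fin 2 → ℝ) (E : Mat2) (z u : Fin 2 → ℝ) :
    phi ρ m E z u = z ⬝ᵥ pTensor ρ m E *ᵥ z / 2 + (m ⬝ᵥ z - ρ * u ⬝ᵥ z) ^ 2 / (2 * ρ) := by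
  simp only [phi, pTensor, sub_mulVec, smul_mulVec, dotProduct_sub, dotProduct_smul,
    vecMulVec_mulVec, smul_eq_mul, MulOpposite.smul_eq_mul_unop, MulOpposite.unop_op,
    dotProduct_comm z m]
  field_simp
  ring

/-- For `i = 0, 1`, `δ` times this state is the perturbation in `Ũ₁`, `Ũ₂`. -/
lemma phi_shear (ρ : ℝ) (m : Fin 2 → ℝ) (i : Fin 2) (z u : Fin 2 → ℝ) :
    phi 0 (ρ • Pi.single i 1)
        ((1 / 2 : ℝ) • (vecMulVec (Pi.single i 1) m + vecMulVec m (Pi.single i 1))) z u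
      = z i * (m ⬝ᵥ z - ρ * u ⬝ᵥ z) := by
  simp only [phi, smul_mulVec, add_mulVec, vecMulVec_mulVec, dotProduct_smul, dotProduct_add,
    smul_dotProduct, dotProduct_single_one, single_one_dotProduct, dotProduct_comm z m,
    MulOpposite.smul_eq_mul_unop, MulOpposite.unop_op]
  ring

lemma quadratic_nonneg_of_sq_le {a b c : ℝ} (ha : 0 < a) (hb : b ^ 2 ≤ 4 * a * c) (x y : ℝ) :
    0 ≤ a * x ^ 2 + b * x * y + c * y ^ 2 := by
  have : 0 ≤ 4 * a * (a * x ^ 2 + b * x * y + c * y ^ 2) := by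
    nlinarith [sq_nonneg (2 * a * x + b * y), mul_nonneg (sub_nonneg.2 hb) (sq_nonneg y)]
  nlinarith

lemma det_div_mul_sq_le_dotProduct_mulVec {p : Mat2} (hp : p.IsHermitian) (i : Fin 2)
    (hpos : 0 < p i.rev i.rev) (z : Fin 2 → ℝ) :
    p.det / p i.rev i.rev * z i ^ 2 ≤ z ⬝ᵥ p *ᵥ z := by
  have h10 : p 1 0 = p 0 1 := by simpa using congrFun (congrFun hp 0) 1
  rw [div_mul_eq_mul_div, div_le_iff₀ hpos]
  simp only [det_fin_two, mulVec, dotProduct, Fin.sum_univ_two, h10]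
  -- `pⱼⱼ · zᵀpz − det p · zᵢ² = (pⱼⱼ zⱼ + pᵢⱼ zᵢ)²`
  fin_cases i
  · simp only [Fin.zero_eta, Fin.isValue, Fin.rev_zero, Fin.reduceLast] at hpos ⊢
    nlinarith [sq_nonneg (p 1 1 * z 1 + p 0 1 * z 0)]
  · simp only [Fin.mk_one, Fin.isValue, Fin.reduceRev] at hpos ⊢
    nlinarith [sq_nonneg (p 0 0 * z 0 + p 0 1 * z 1)]

lemma sheared_mem_Gbar {β δ ρ : ℝ} {m : Fin 2 → ℝ} {E : Mat2} (hβ : 0 < β) (hE : E.IsSymm)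
    (hU : (ρ, m, E) ∈ G) (i : Fin 2)
    (hδ : |δ| ≤ √((pTensor ρ m E).det / (ρ * pTensor ρ m E i.rev i.rev)) * β) :
    (β * ρ, β • m + δ • (ρ • Pi.single i 1),
      β • E + δ • ((1 / 2 : ℝ) • (vecMulVec (Pi.single i 1) m + vecMulVec m (Pi.single i 1))))
      ∈ Gbar := by
  obtain ⟨hρ, hp⟩ := hU
  set p := pTensor ρ m E
  have hpii : 0 < p i.rev i.rev := hp.diag_pos
  have hδ_sq : δ ^ 2 ≤ p.det / (ρ * p i.rev i.rev) * β ^ 2 := by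
    have hb : 0 ≤ p.det / (ρ * p i.rev i.rev) := by have := hp.det_pos; positivity
    calc δ ^ 2 = |δ| ^ 2 := (sq_abs δ).symm
      _ ≤ (√(p.det / (ρ * p i.rev i.rev)) * β) ^ 2 := by gcongr
      _ = p.det / (ρ * p i.rev i.rev) * β ^ 2 := by rw [mul_pow, Real.sq_sqrt hb]
  have hshear : (vecMulVec (Pi.single i 1) m + vecMulVec m (Pi.single i 1)).IsSymm := by
    simp [IsSymm, transpose_vecMulVec, add_comm]
  refine ⟨by positivity, (hE.smul β).add ((hshear.smul _).smul δ), fun z u => ?_⟩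
  rw [phi_smul_add_smul, phi_eq_pTensor_add_sq hρ.ne', phi_shear]
  set w := m ⬝ᵥ z - ρ * u ⬝ᵥ z
  have hq := det_div_mul_sq_le_dotProduct_mulVec hp.isHermitian i hpii z
  have hdisc : δ ^ 2 ≤ 4 * (β / 2 * (p.det / p i.rev i.rev)) * (β / (2 * ρ)) := by
    convert hδ_sq using 1; field_simp; ring
  calc 0 ≤ β / 2 * (p.det / p i.rev i.rev) * z i ^ 2 + δ * z i * w + β / (2 * ρ) * w ^ 2 :=
        quadratic_nonneg_of_sq_le (by have := hp.det_pos; positivity) hdisc _ _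
    _ ≤ β * (z ⬝ᵥ p *ᵥ z / 2 + w ^ 2 / (2 * ρ)) + δ * (z i * w) := by
        linear_combination (β / 2) * hq

/-- Lemma 2.4 of the paper: perturbed states `Ũ₁, Ũ₂` stay in the closed admissible set. -/
theorem perturbed_states_mem_closure (β : ℝ) (hβ : 0 < β)
    (ρ : ℝ) (m : Fin 2 → ℝ) (E : Mat2) (hE : E.IsSymm) (hU : (ρ, m, E) ∈ G)
    (δ1 δ2 : ℝ)
    (h1 : |δ1| ≤ min (Real.sqrt ((pTensor ρ m E) 0 0 / ρ))
        (Real.sqrt ((pTensor ρ m E).det / (ρ * (pTensor ρ m E) 1 1))) * β)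
    (h2 : |δ2| ≤ min (Real.sqrt ((pTensor ρ m E) 1 1 / ρ))
        (Real.sqrt ((pTensor ρ m E).det / (ρ * (pTensor ρ m E) 0 0))) * β) :
    (β * ρ, β • m + δ1 • ![ρ, 0], β • E + δ1 • !![m 0, m 1 / 2; m 1 / 2, 0]) ∈ Gbar ∧
    (β * ρ, β • m + δ2 • ![0, ρ], β • E + δ2 • !![0, m 0 / 2; m 0 / 2, m 1]) ∈ Gbar := by
  constructor
  · convert sheared_mem_Gbar hβ hE hU 0
      (h1.trans (mul_le_mul_of_nonneg_right (min_le_right _ _) hβ.le)) using 5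
    · ext j; fin_cases j <;> simp
    · ext j k; fin_cases j <;> fin_cases k <;> simp [vecMulVec] <;> ring
  · convert sheared_mem_Gbar hβ hE hU 1
      (h2.trans (mul_le_mul_of_nonneg_right (min_le_right _ _) hβ.le)) using 5
    · ext j; fin_cases j <;> simp
    · ext j k; fin_cases j <;> fin_cases k <;> simp [vecMulVec] <;> ring
end
end

section
/- Let A, B, C be symmetric positive definite 2×2 real matrices (with entries aᵢⱼ, bᵢⱼ, cᵢⱼ) such that a₂₂ = b₂₂ and c₁₁ = a₁₁. Then there exist real numbers t₁, t₂, t₃, t₄ such that, with T₁ := [[t₁, t₂],[0, 1]] and T₂ := [[1, 0],[t₄, t₃]], one has B = T₁ A T₁ᵀ and C = T₂ A T₂ᵀ. -/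
open Matrix

noncomputable section

/-!
Congruence by `T = !![s, t; 0, 1]` keeps the `(1, 1)` entry, sends the off-diagonal entries to
`s * A 0 1 + t * A 1 1`, and multiplies the determinant by `s ^ 2`. A 2×2 matrix with nonzero
`(1, 1)` entry is determined by its determinant and its other three entries, so
`s = √(det B / det A)` and the `t` matching the off-diagonal entry give `B`. The lower triangular
case is the upper one conjugated by the coordinate swap.
-/

namespace Matrix

theorem eq_of_det_eq_fin_two {R : Type*} [CommRing R] [IsDomain R]
    {M N : Matrix (Fin 2) (Fin 2) R} (h01 : M 0 1 = N 0 1) (h10 : M 1 0 = N 1 0)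
    (h11 : M 1 1 = N 1 1) (hN11 : N 1 1 ≠ 0) (hdet : M.det = N.det) : M = N := by
  have h00 : M 0 0 = N 0 0 := by
    rw [det_fin_two, det_fin_two, h01, h10, h11] at hdet
    exact mul_right_cancel₀ hN11 (by linear_combination hdet)
  ext i j
  fin_cases i <;> fin_cases j <;> assumption

theorem upper_mul_mul_transpose_fin_two {R : Type*} [CommRing R] (s t : R)
    (A : Matrix (Fin 2) (Fin 2) R) :
    !![s, t; 0, 1] * A * (!![s, t; 0, 1])ᵀ =
      !![s ^ 2 * A 0 0 + s * t * (A 0 1 + A 1 0) + t ^ 2 * A 1 1, s * A 0 1 + t * A 1 1;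
        s * A 1 0 + t * A 1 1, A 1 1] := by
  ext i j
  fin_cases i <;> fin_cases j <;> simp [mul_apply, vecMul, dotProduct, Fin.sum_univ_two] <;> ring

theorem IsHermitian.apply_one_zero {M : Matrix (Fin 2) (Fin 2) ℝ} (hM : M.IsHermitian) :
    M 1 0 = M 0 1 := by
  simpa using hM.apply 0 1

theorem PosDef.exists_eq_upper_mul_mul_transpose {A B : Matrix (Fin 2) (Fin 2) ℝ}
    (hA : A.PosDef) (hB : B.PosDef) (h11 : A 1 1 = B 1 1) :
    ∃ s t : ℝ, B = !![s, t; 0, 1] * A * (!![s, t; 0, 1])ᵀ := by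
  have hB11 : B 1 1 ≠ 0 := hB.diag_pos.ne'
  obtain ⟨s, hs⟩ : ∃ s : ℝ, s ^ 2 * A.det = B.det :=
    ⟨√(B.det / A.det), by rw [Real.sq_sqrt (div_pos hB.det_pos hA.det_pos).le,
      div_mul_cancel₀ _ hA.det_pos.ne']⟩
  set t := (B 0 1 - s * A 0 1) / B 1 1
  have hdet : (!![s, t; 0, 1] * A * (!![s, t; 0, 1])ᵀ).det = B.det := by
    rw [det_mul, det_mul, det_transpose, det_fin_two_of, ← hs]
    ring
  refine ⟨s, t, (eq_of_det_eq_fin_two ?_ ?_ ?_ hB11 hdet).symm⟩ <;>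
    simp only [upper_mul_mul_transpose_fin_two, of_apply, cons_val', cons_val_zero, cons_val_one,
      empty_val', cons_val_fin_one, hA.isHermitian.apply_one_zero,
      hB.isHermitian.apply_one_zero, h11, t]
  all_goals field_simp; ring

theorem PosDef.exists_eq_lower_mul_mul_transpose {A C : Matrix (Fin 2) (Fin 2) ℝ}
    (hA : A.PosDef) (hC : C.PosDef) (h00 : A 0 0 = C 0 0) :
    ∃ s t : ℝ, C = !![1, 0; t, s] * A * (!![1, 0; t, s])ᵀ := by
  let σ := Equiv.swap (0 : Fin 2) 1
  have hσσ : ⇑σ ∘ ⇑σ = id := funext (Equiv.swap_apply_self 0 1)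
  obtain ⟨s, t, hst⟩ := (hA.submatrix σ.injective).exists_eq_upper_mul_mul_transpose
    (hC.submatrix σ.injective) (by simpa [σ] using h00)
  have hσ : (!![s, t; 0, 1]).submatrix σ σ = !![1, 0; t, s] := by
    ext i j; fin_cases i <;> fin_cases j <;> simp [σ]
  refine ⟨s, t, ?_⟩
  calc C = (C.submatrix σ σ).submatrix σ σ := by rw [submatrix_submatrix, hσσ, submatrix_id_id]
    _ = (!![s, t; 0, 1] * A.submatrix σ σ * (!![s, t; 0, 1])ᵀ).submatrix σ σ := by rw [hst]
    _ = !![1, 0; t, s] * A * (!![1, 0; t, s])ᵀ := by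
      rw [← submatrix_mul_equiv _ _ _ σ, ← submatrix_mul_equiv _ _ _ σ, submatrix_submatrix,
        ← transpose_submatrix, hσ, hσσ, submatrix_id_id]

end Matrix

/-- Lemma 2.7: congruence by triangular matrices between positive definite matrices
sharing a diagonal entry. -/
theorem triangular_congruence_exists (A B C : Mat2)
    (hA : A.PosDef) (hB : B.PosDef) (hC : C.PosDef)
    (hab : A 1 1 = B 1 1) (hca : C 0 0 = A 0 0) :
    ∃ t1 t2 t3 t4 : ℝ,
      B = !![t1, t2; 0, 1] * A * (!![t1, t2; 0, 1])ᵀ ∧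
      C = !![1, 0; t4, t3] * A * (!![1, 0; t4, t3])ᵀ := by
  obtain ⟨t1, t2, hB_eq⟩ := hA.exists_eq_upper_mul_mul_transpose hB hab
  obtain ⟨t3, t4, hC_eq⟩ := hA.exists_eq_lower_mul_mul_transpose hC hca.symm
  exact ⟨t1, t2, t3, t4, hB_eq, hC_eq⟩
end
end

section
/- Let A and B be symmetric positive definite 2×2 real matrices with a₂₂ = b₂₂. Define t₁ := √(det(B)/det(A)), t₂ := (b₁₂ − a₁₂t₁)/a₂₂, and T₁ := [[t₁, t₂],[0, 1]]. Then B = T₁ A T₁ᵀ. -/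
/-!
A symmetric 2×2 matrix with nonzero (1,1) entry is determined by its (0,1) and (1,1) entries
and its determinant. Congruence by `T₁ = !![t₁, t₂; 0, 1]` preserves symmetry and the (1,1)
entry, turns the (0,1) entry into `t₁ a₁₂ + t₂ a₂₂ = b₁₂` (the choice of `t₂`) and the determinant
into `t₁² det A = det B` (the choice of `t₁`).
-/

open Matrix

noncomputable section

namespace Matrix

theorem IsSymm.mul_mul_transpose {R n m : Type*} [CommSemiring R] [Fintype n] [Fintype m]
    {A : Matrix n n R} (hA : A.IsSymm) (P : Matrix m n R) : (P * A * Pᵀ).IsSymm := by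
  rw [IsSymm, transpose_mul, transpose_mul, transpose_transpose, hA.eq, Matrix.mul_assoc]

theorem det_mul_mul_transpose {R n : Type*} [CommRing R] [Fintype n] [DecidableEq n]
    (P A : Matrix n n R) : (P * A * Pᵀ).det = P.det ^ 2 * A.det := by
  rw [det_mul, det_mul, det_transpose]
  ring

theorem eq_of_isSymm_of_det_eq_fin_two {R : Type*} [CommRing R] [IsDomain R]
    {M N : Matrix (Fin 2) (Fin 2) R} (hM : M.IsSymm) (hN : N.IsSymm)
    (h01 : M 0 1 = N 0 1) (h11 : M 1 1 = N 1 1) (h11_ne : N 1 1 ≠ 0)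
    (hdet : M.det = N.det) : M = N := by
  have h00 : M 0 0 = N 0 0 := by
    rw [det_fin_two, det_fin_two, hM.apply 0 1, hN.apply 0 1, h01, h11] at hdet
    exact mul_right_cancel₀ h11_ne (by linear_combination hdet)
  ext i j
  fin_cases i <;> fin_cases j
  exacts [h00, h01, by simpa [hM.apply, hN.apply] using h01, h11]

variable {R : Type*} [CommRing R] (A : Matrix (Fin 2) (Fin 2) R) (t₁ t₂ : R)

theorem upperTriangular_congr_apply_zero_one :
    (!![t₁, t₂; 0, 1] * A * (!![t₁, t₂; 0, 1])ᵀ) 0 1 = t₁ * A 0 1 + t₂ * A 1 1 := by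
  simp [mul_apply, vecMul, dotProduct, Fin.sum_univ_two]

theorem upperTriangular_congr_apply_one_one :
    (!![t₁, t₂; 0, 1] * A * (!![t₁, t₂; 0, 1])ᵀ) 1 1 = A 1 1 := by
  simp [mul_apply, vecMul, dotProduct, Fin.sum_univ_two]

theorem det_upperTriangular_congr :
    (!![t₁, t₂; 0, 1] * A * (!![t₁, t₂; 0, 1])ᵀ).det = t₁ ^ 2 * A.det := by
  rw [det_mul_mul_transpose, det_fin_two_of, mul_one, mul_zero, sub_zero]

end Matrix

/-- Explicit triangular congruence: with `t₁ = √(det B / det A)` and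
`t₂ = (b₁₂ − a₁₂ t₁)/a₂₂`, one has `B = T₁ A T₁ᵀ`. -/
theorem triangular_congruence_explicit (A B : Mat2)
    (hA : A.PosDef) (hB : B.PosDef) (hab : A 1 1 = B 1 1)
    (t1 t2 : ℝ) (ht1 : t1 = Real.sqrt (B.det / A.det))
    (ht2 : t2 = (B 0 1 - A 0 1 * t1) / A 1 1) :
    B = !![t1, t2; 0, 1] * A * (!![t1, t2; 0, 1])ᵀ := by
  have hA11 : 0 < A 1 1 := hA.diag_pos
  have hdet : t1 ^ 2 * A.det = B.det := by
    rw [ht1, Real.sq_sqrt (div_pos hB.det_pos hA.det_pos).le, div_mul_cancel₀ _ hA.det_pos.ne']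
  have h01 : t1 * A 0 1 + t2 * A 1 1 = B 0 1 := by
    rw [ht2, div_mul_cancel₀ _ hA11.ne']
    ring
  symm
  apply eq_of_isSymm_of_det_eq_fin_two
    ((isHermitian_iff_isSymm.mp hA.isHermitian).mul_mul_transpose _)
    (isHermitian_iff_isSymm.mp hB.isHermitian)
  · rw [upperTriangular_congr_apply_zero_one, h01]
  · rw [upperTriangular_congr_apply_one_one, hab]
  · exact hab ▸ hA11.ne'
  · rw [det_upperTriangular_congr, hdet]
end
end

section
/- Let a ≥ 1 and b, c > 0 be real numbers. For θ ∈ (0,1) define f₁(θ) := (1−θ)/a, f₂(θ) := θ/(θ+b), f₃(θ) := θ/(θ+c), and f(θ) := min{f₁(θ), f₂(θ), f₃(θ)}. Set θ_b := (√((a+b−1)² + 4b) − (a+b−1))/2, θ_c := (√((a+c−1)² + 4c) − (a+c−1))/2, and θ* := max{θ_b, θ_c}. Then θ* ∈ (0,1); θ_b is the unique θ ∈ (0,1) with f₁(θ) = f₂(θ) and θ_c is the unique θ ∈ (0,1) with f₁(θ) = f₃(θ); and f attains its maximum over (0,1) at θ*, with f(θ*) = f₁(θ*), i.e. f(θ)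 ≤ f₁(θ*) for all θ ∈ (0,1). -/
set_option maxHeartbeats 800000

private lemma root_props (a b θb : ℝ) (ha : 1 ≤ a) (hb : 0 < b)
    (hθb : θb = (Real.sqrt ((a + b - 1) ^ 2 + 4 * b) - (a + b - 1)) / 2) :
    0 < θb ∧ θb < 1 ∧ θb ^ 2 + (a + b - 1) * θb - b = 0 := by
  have hnn : (0:ℝ) ≤ (a + b - 1) ^ 2 + 4 * b := by positivity
  have hs := Real.sq_sqrt hnn
  have hsnn := Real.sqrt_nonneg ((a + b - 1) ^ 2 + 4 * b)
  set s := Real.sqrt ((a + b - 1) ^ 2 + 4 * b) with hsdef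
  subst hθb
  refine ⟨by nlinarith [sq_nonneg (s - (a+b-1))], by nlinarith [sq_nonneg (s - (a+b-1))], by nlinarith⟩

private lemma eq_root (a b θb θ : ℝ) (ha : 1 ≤ a) (hb : 0 < b) (h0 : 0 < θb)
    (hq : θb ^ 2 + (a + b - 1) * θb - b = 0) (ht0 : 0 < θ)
    (hq2 : θ ^ 2 + (a + b - 1) * θ - b = 0) : θ = θb := by
  have key : (θ - θb) * (θ + θb + (a + b - 1)) = 0 := by nlinarith
  rcases mul_eq_zero.1 key with h | h
  · linarith
  · nlinarith

private lemma root_eq (a b θb : ℝ) (ha : 1 ≤ a) (hb : 0 < b) (h0 : 0 < θb)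
    (hq : θb ^ 2 + (a + b - 1) * θb - b = 0) :
    (1 - θb) / a = θb / (θb + b) := by
  have ha0 : (0:ℝ) < a := by linarith
  have htb : (0:ℝ) < θb + b := by linarith
  rw [div_eq_div_iff ha0.ne' htb.ne']
  nlinarith

/-- The optimal parameter `θ*` maximizing `f = min{f₁, f₂, f₃}` over `(0,1)`. -/
theorem optimal_theta (a b c : ℝ) (ha : 1 ≤ a) (hb : 0 < b) (hc : 0 < c)
    (f1 f2 f3 f : ℝ → ℝ)
    (hf1 : ∀ θ, f1 θ = (1 - θ) / a)
    (hf2 : ∀ θ, f2 θ = θ / (θ + b))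
    (hf3 : ∀ θ, f3 θ = θ / (θ + c))
    (hf : ∀ θ, f θ = min (f1 θ) (min (f2 θ) (f3 θ)))
    (θb θc θs : ℝ)
    (hθb : θb = (Real.sqrt ((a + b - 1) ^ 2 + 4 * b) - (a + b - 1)) / 2)
    (hθc : θc = (Real.sqrt ((a + c - 1) ^ 2 + 4 * c) - (a + c - 1)) / 2)
    (hθs : θs = max θb θc) :
    θs ∈ Set.Ioo (0 : ℝ) 1 ∧
    (∀ θ ∈ Set.Ioo (0 : ℝ) 1, f1 θ = f2 θ ↔ θ = θb) ∧
    (∀ θ ∈ Set.Ioo (0 : ℝ) 1, f1 θ = f3 θ ↔ θ = θc) ∧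
    f θs = f1 θs ∧
    (∀ θ ∈ Set.Ioo (0 : ℝ) 1, f θ ≤ f1 θs) := by
  obtain ⟨hb0, hb1, hbq⟩ := root_props a b θb ha hb hθb
  obtain ⟨hc0, hc1, hcq⟩ := root_props a c θc ha hc hθc
  have ha0 : (0:ℝ) < a := by linarith
  have hs0 : 0 < θs := by rw [hθs]; exact lt_max_of_lt_left hb0
  have hs1 : θs < 1 := by rw [hθs]; exact max_lt hb1 hc1
  have hsb : θb ≤ θs := hθs ▸ le_max_left _ _
  have hsc : θc ≤ θs := hθs ▸ le_max_right _ _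
  -- f1 θs ≤ f2 θs and f1 θs ≤ f3 θs
  have h12 : f1 θs ≤ f2 θs := by
    rw [hf1, hf2, div_le_div_iff₀ ha0 (by linarith)]
    nlinarith
  have h13 : f1 θs ≤ f3 θs := by
    rw [hf1, hf3, div_le_div_iff₀ ha0 (by linarith)]
    nlinarith
  have hmin : f θs = f1 θs := by
    rw [hf]; exact min_eq_left (le_min h12 h13)
  refine ⟨⟨hs0, hs1⟩, ?_, ?_, hmin, ?_⟩
  · rintro θ ⟨ht0, ht1⟩
    rw [hf1, hf2]
    constructor
    · intro h
      rw [div_eq_div_iff ha0.ne' (by linarith : (0:ℝ) < _).ne'] at h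
      exact eq_root a b θb θ ha hb hb0 hbq ht0 (by nlinarith)
    · rintro rfl
      exact root_eq a b θ ha hb ht0 hbq
  · rintro θ ⟨ht0, ht1⟩
    rw [hf1, hf3]
    constructor
    · intro h
      rw [div_eq_div_iff ha0.ne' (by linarith : (0:ℝ) < _).ne'] at h
      exact eq_root a c θc θ ha hc hc0 hcq ht0 (by nlinarith)
    · rintro rfl
      exact root_eq a c θ ha hc ht0 hcq
  · rintro θ ⟨ht0, ht1⟩
    rw [hf]
    rcases le_total θs θ with hle | hle
    · calc min (f1 θ) (min (f2 θ) (f3 θ)) ≤ f1 θ := min_le_left _ _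
        _ ≤ f1 θs := by
            rw [hf1, hf1]
            gcongr
    · rcases le_total θb θc with hbc | hbc
      · have hsc' : θs = θc := by rw [hθs, max_eq_right hbc]
        calc min (f1 θ) (min (f2 θ) (f3 θ)) ≤ f3 θ :=
              le_trans (min_le_right _ _) (min_le_right _ _)
          _ ≤ f3 θc := by
              have hlc : θ ≤ θc := by rw [← hsc']; exact hle
              rw [hf3, hf3, div_le_div_iff₀ (by linarith) (by linarith)]
              nlinarith [mul_le_mul_of_nonneg_left hlc hc.le]
          _ = f1 θc := by
              rw [hf3, hf1]; exact (root_eq a c θc ha hc hc0 hcq).symm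
          _ = f1 θs := by rw [hsc']
      · have hsb' : θs = θb := by rw [hθs, max_eq_left hbc]
        calc min (f1 θ) (min (f2 θ) (f3 θ)) ≤ f2 θ :=
              le_trans (min_le_right _ _) (min_le_left _ _)
          _ ≤ f2 θb := by
              have hlb : θ ≤ θb := by rw [← hsb']; exact hle
              rw [hf2, hf2, div_le_div_iff₀ (by linarith) (by linarith)]
              nlinarith [mul_le_mul_of_nonneg_left hlb hb.le]
          _ = f1 θb := by
              rw [hf2, hf1]; exact (root_eq a b θb ha hb hb0 hbq).symm
          _ = f1 θs := by rw [hsb']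
end
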